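/- arXiv:1702.03527 — 2 statements merged into one kernel-verified Lean document; each statement's English description precedes it below -/
import Mathlib

section
/- In the exponential graph $K_n^{K_n}$ (for $n \geq 2$), every bijective vertex $f: [n] \to [n]$ satisfies $N(f) = \{f\}$; consequently the neighborhood complex $\mathcal{N}(K_n^{K_n})$ is disconnected. -/
/-!
A neighbour `g` of a bijective `f` must equal `f`: for each `j`, surjectivity gives `i` with
`f i = g j`, and adjacency forces `i = j`. So a face of the neighbourhood complex containing `id`
has common neighbour `id`, and then all its vertices are neighbours of `id`, i.e. equal to `id`.
Hence at every point of the realization the weight of `id` is `0` or `1`; this continuous function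
takes both values (at the vertex `id` and at a constant map), contradicting connectedness.
-/

/-- Adjacency in the exponential graph `K_n^{K_n}`. -/
def ExpAdj (n m : ℕ) (f g : Fin n → Fin m) : Prop :=
  ∀ i j : Fin n, i ≠ j → f i ≠ g j

/-- Geometric realization of an abstract simplicial complex with vertex set `V`,
given by its set `K` of faces: points are convex weights supported on a face. -/
def Realization {V : Type*} (K : Finset V → Prop) : Type _ :=
  {w : V → ℝ // (∀ v, 0 ≤ w v) ∧ (∑ᶠ v, w v) = 1 ∧
    ∃ σ : Finset V, K σ ∧ ∀ v, w v ≠ 0 → v ∈ σ}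

instance {V : Type*} (K : Finset V → Prop) : TopologicalSpace (Realization K) :=
  instTopologicalSpaceSubtype

/-- Faces of the neighborhood complex `𝒩(K_n^{K_n})`: sets of vertices with a
common neighbor. -/
def NFace (n : ℕ) (σ : Finset (Fin n → Fin n)) : Prop :=
  ∃ h : Fin n → Fin n, ∀ f ∈ σ, ExpAdj n n f h

open Function

section ExpAdj

variable {n m : ℕ} {f g : Fin n → Fin m}

theorem ExpAdj.symm (h : ExpAdj n m f g) : ExpAdj n m g f :=
  fun i j hij => (h j i hij.symm).symm

theorem ExpAdj.eq_of_surjective (hf : Surjective f) (h : ExpAdj n m f g) : g = f := by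
  funext j
  obtain ⟨i, hi⟩ := hf (g j)
  obtain rfl : i = j := by_contra fun hij => h i j hij hi
  exact hi.symm

theorem expAdj_self_of_injective (hf : Injective f) : ExpAdj n m f f :=
  fun _ _ hij h => hij (hf h)

theorem expAdj_iff_eq_of_bijective (hf : Bijective f) : ExpAdj n m f g ↔ g = f :=
  ⟨ExpAdj.eq_of_surjective hf.2, by rintro rfl; exact expAdj_self_of_injective hf.1⟩

theorem expAdj_const {a b : Fin m} (hab : a ≠ b) : ExpAdj n m (fun _ => a) (fun _ => b) :=
  fun _ _ _ => hab

end ExpAdj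

theorem NFace.singleton {n : ℕ} {f g : Fin n → Fin n} (h : ExpAdj n n f g) : NFace n {f} :=
  ⟨g, fun _ hf' => Finset.mem_singleton.1 hf' ▸ h⟩

theorem NFace.eq_of_mem_of_bijective {n : ℕ} {σ : Finset (Fin n → Fin n)} {f g : Fin n → Fin n}
    (hσ : NFace n σ) (hf : Bijective f) (hfσ : f ∈ σ) (hgσ : g ∈ σ) : g = f := by
  obtain ⟨h, hh⟩ := hσ
  obtain rfl : h = f := (expAdj_iff_eq_of_bijective hf).1 (hh f hfσ)
  exact (expAdj_iff_eq_of_bijective hf).1 (hh g hgσ).symm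

namespace Realization

variable {V : Type*} {K : Finset V → Prop}

def vertex [DecidableEq V] (v : V) (hv : K {v}) : Realization K :=
  ⟨Pi.single v 1, fun u => by by_cases h : u = v <;> simp [h],
    by rw [finsum_eq_single _ v fun u hu => Pi.single_eq_of_ne hu 1, Pi.single_eq_same],
    {v}, hv, fun u hu => by_contra fun h => hu (Pi.single_eq_of_ne (by simpa using h) 1)⟩

theorem apply_eq_zero_or_eq_one {v : V} (hv : ∀ σ, K σ → v ∈ σ → ∀ u ∈ σ, u = v)
    (w : Realization K) : w.1 v = 0 ∨ w.1 v = 1 := by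
  obtain ⟨-, hsum, σ, hσ, hsupp⟩ := w.2
  refine or_iff_not_imp_left.2 fun hw => ?_
  refine (finsum_eq_single _ v fun u hu => ?_).symm.trans hsum
  exact by_contra fun hwu => hu (hv σ hσ (hsupp v hw) u (hsupp u hwu))

theorem not_connectedSpace [DecidableEq V] {u v : V} (huv : u ≠ v) (hu : K {u}) (hv : K {v})
    (hiso : ∀ σ, K σ → v ∈ σ → ∀ u ∈ σ, u = v) : ¬ ConnectedSpace (Realization K) := by
  intro _
  let weight : Realization K → ℝ := fun w => w.1 v
  have hconn : IsPreconnected (Set.range weight) :=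
    isPreconnected_range (f := weight) ((continuous_apply v).comp continuous_subtype_val)
  have h0 : (0 : ℝ) ∈ Set.range weight := ⟨vertex u hu, Pi.single_eq_of_ne huv.symm 1⟩
  have h1 : (1 : ℝ) ∈ Set.range weight := ⟨vertex v hv, Pi.single_eq_same v 1⟩
  obtain ⟨w, hw⟩ := hconn.Icc_subset h0 h1 (show (1 / 2 : ℝ) ∈ Set.Icc 0 1 by norm_num)
  rcases apply_eq_zero_or_eq_one hiso w with h | h <;> norm_num [weight, h] at hw

end Realization

/-- In `K_n^{K_n}` (`n ≥ 2`), every bijective vertex `f` satisfies `N(f) = {f}`;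
consequently the neighborhood complex `𝒩(K_n^{K_n})` is disconnected. -/
theorem bijective_selfneighbor_and_disconnected (n : ℕ) (hn : 2 ≤ n) :
    (∀ f : Fin n → Fin n, Function.Bijective f →
      ∀ g : Fin n → Fin n, ExpAdj n n f g ↔ g = f) ∧
    ¬ ConnectedSpace (Realization (NFace n)) := by
  refine ⟨fun f hf g => expAdj_iff_eq_of_bijective hf, ?_⟩
  let zero : Fin n := ⟨0, by omega⟩
  let one : Fin n := ⟨1, by omega⟩
  have hzero_ne_one : zero ≠ one := by simp [zero, one, Fin.ext_iff]
  have hconst_ne_id : (fun _ => zero) ≠ id := fun h => hzero_ne_one (congrFun h one)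
  exact Realization.not_connectedSpace hconst_ne_id
    (NFace.singleton (expAdj_const hzero_ne_one))
    (NFace.singleton (expAdj_self_of_injective injective_id))
    fun σ hσ hid _ => hσ.eq_of_mem_of_bijective bijective_id hid
end

section
/- Let $\eta = \{\langle x_1 \rangle, \dots, \langle x_p \rangle, f_1, f_2\}$ be a simplex of $\mathcal{N}(G)$ contained in $N(w_1 \cdots w_n)$ where $w_k = 1$, $\{x_1,\dots,x_p\} = [m] \setminus \{w_1,\dots,w_n\}$, $f_2(i) = w_i$ for all $i \neq k$, and $w_{i_0} = \min\{w_j : j \neq k\}$. If $f_2(k) > w_{i_0}$, then $\eta \setminus \{f_1\}$ lies in $S_{w_{i_0}}$ of the matching (i.e., it is matched with $(\eta \setminus \{f_1\}) \cup \langle w_{i_0} \rangle$). -/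
/-- Vertices of the fold `G` of `K_m^{K_n}`: constant maps and injective maps. -/
def GVert (n m : ℕ) (f : Fin n → Fin m) : Prop :=
  (∃ x, ∀ i, f i = x) ∨ Function.Injective f

/-- The constant map `⟨k+1⟩` (colors `1,…,m` are represented by `0,…,m-1`). -/
def cst (n m : ℕ) [NeZero m] (k : ℕ) : Fin n → Fin m := fun _ => Fin.ofNat m k

/-- Nonempty faces of the neighborhood complex `𝒩(G)` of the fold `G`. -/
def NFaceG (n m : ℕ) (σ : Finset (Fin n → Fin m)) : Prop :=
  (∀ f ∈ σ, GVert n m f) ∧ ∃ h, GVert n m h ∧ ∀ f ∈ σ, ExpAdj n m f h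

/-- `Sp n m k` is the set `S'_{k}` of the paper (with `S'_0` the full face poset
of `𝒩(G)`): the faces still unmatched after matching with the constant maps
`⟨1⟩, …, ⟨k⟩`. -/
def Sp (n m : ℕ) [NeZero m] : ℕ → Set (Finset (Fin n → Fin m))
  | 0 => {σ | σ.Nonempty ∧ NFaceG n m σ}
  | k + 1 =>
      Sp n m k \
        ({σ | σ ∈ Sp n m k ∧ cst n m k ∉ σ ∧ insert (cst n m k) σ ∈ Sp n m k} ∪
          (insert (cst n m k)) ''
            {σ | σ ∈ Sp n m k ∧ cst n m k ∉ σ ∧ insert (cst n m k) σ ∈ Sp n m k})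

/-- `MSet n m k` is the set `S_{k+1}` of the paper: the faces matched (by adding
the constant map `⟨k+1⟩`) at stage `k+1`. -/
def MSet (n m : ℕ) [NeZero m] (k : ℕ) : Set (Finset (Fin n → Fin m)) :=
  {σ | σ ∈ Sp n m k ∧ cst n m k ∉ σ ∧ insert (cst n m k) σ ∈ Sp n m k}

/-- A face of `𝒩(G)` is critical when it is unmatched by the matching `μ`. -/
def Critical (n m : ℕ) [NeZero m] (σ : Finset (Fin n → Fin m)) : Prop :=
  σ ∈ Sp n m 0 ∧ ∀ k < m, σ ∉ MSet n m k ∧ ¬ ∃ τ ∈ MSet n m k, σ = insert (cst n m k) τ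


/-!
Colours are those of the code, so `⟨0⟩` is the paper's `⟨1⟩`. Put `c = w i₀`,
`σ = η \ {f₁} = {⟨x⟩ | x ∉ range w} ∪ {f₂}` and `σ⁺ = σ ∪ {⟨c⟩}`; `σ⁺` is a face with common
neighbour `⟨0⟩`. Neither `σ` nor `σ⁺` is matched at the first stage, because adding `⟨0⟩`
forces a common neighbour to take its values in `range w \ {0}`. At a stage `0 < l < c`
both contain `⟨l⟩` (the image of `w` skips `l`), and their only possible partners,
`σ \ ⟨l⟩` and `σ⁺ \ ⟨l⟩`, were already matched with `⟨0⟩` (common neighbour `⟨l⟩`). So both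
survive until stage `c`, where `σ` is matched with `σ⁺`.
-/

open Function Finset

section Matching

variable {n m : ℕ} [NeZero m]

lemma Sp_antitone : Antitone (Sp n m) :=
  antitone_nat_of_succ_le fun _ _ h => h.1

lemma mem_Sp_zero_of_subset {σ τ : Finset (Fin n → Fin m)} (hστ : σ ⊆ τ) (hσ : σ.Nonempty)
    (hτ : τ ∈ Sp n m 0) : σ ∈ Sp n m 0 := by
  obtain ⟨-, hvert, h, hh, hadj⟩ := hτ
  exact ⟨hσ, fun f hf => hvert f (hστ hf), h, hh, fun f hf => hadj f (hστ hf)⟩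

lemma mem_Sp_zero_of_forall_ne {σ : Finset (Fin n → Fin m)} (d : Fin m) (hσ : σ.Nonempty)
    (hvert : ∀ f ∈ σ, GVert n m f) (hne : ∀ f ∈ σ, ∀ i, f i ≠ d) : σ ∈ Sp n m 0 :=
  ⟨hσ, hvert, fun _ => d, Or.inl ⟨d, fun _ => rfl⟩, fun f hf i _ _ => hne f hf i⟩

lemma mem_MSet_zero_of_subset {σ τ : Finset (Fin n → Fin m)} (hστ : σ ⊆ τ)
    (hσ : σ.Nonempty) (hτ : τ ∈ MSet n m 0) : σ ∈ MSet n m 0 :=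
  ⟨mem_Sp_zero_of_subset hστ hσ hτ.1, fun h => hτ.2.1 (hστ h),
    mem_Sp_zero_of_subset (insert_subset_insert _ hστ) (insert_nonempty _ _) hτ.2.2⟩

lemma not_mem_Sp_one_of_mem_MSet_zero {σ : Finset (Fin n → Fin m)} (hσ : σ ∈ MSet n m 0) :
    σ ∉ Sp n m 1 :=
  fun h => h.2 (Or.inl hσ)

lemma mem_Sp_one {σ : Finset (Fin n → Fin m)} (hσ : σ ∈ Sp n m 0) (hcst : cst n m 0 ∉ σ)
    (hins : insert (cst n m 0) σ ∉ Sp n m 0) : σ ∈ Sp n m 1 := by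
  refine ⟨hσ, ?_⟩
  rintro (hM | ⟨τ, -, rfl⟩)
  · exact hins hM.2.2
  · exact hcst (mem_insert_self _ _)

/- The only face that could be matched with `σ ∋ ⟨l⟩` at stage `l` is `σ \ ⟨l⟩`,
and that one was already used up at the first stage. -/
lemma mem_Sp_succ_of_erase_mem_MSet_zero {l : ℕ} (hl : 0 < l) {σ : Finset (Fin n → Fin m)}
    (hσ : σ ∈ Sp n m l) (hcst : cst n m l ∈ σ) (herase : σ.erase (cst n m l) ∈ MSet n m 0) :
    σ ∈ Sp n m (l + 1) := by
  refine ⟨hσ, ?_⟩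
  rintro (hM | ⟨τ, hτ, rfl⟩)
  · exact hM.2.1 hcst
  · rw [erase_insert hτ.2.1] at herase
    exact not_mem_Sp_one_of_mem_MSet_zero herase (Sp_antitone hl hτ.1)

theorem mem_Sp_of_erase_mem_MSet_zero {σ : Finset (Fin n → Fin m)} {c : ℕ}
    (hσ : σ ∈ Sp n m 0) (hcst : cst n m 0 ∉ σ) (hins : insert (cst n m 0) σ ∉ Sp n m 0)
    (hfacet : ∀ l, 0 < l → l < c → cst n m l ∈ σ ∧ σ.erase (cst n m l) ∈ MSet n m 0) :
    σ ∈ Sp n m c := by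
  induction c with
  | zero => exact hσ
  | succ l ih =>
    have hl := ih fun l' hl'0 hl'l => hfacet l' hl'0 (hl'l.trans l.lt_succ_self)
    rcases Nat.eq_zero_or_pos l with rfl | hl0
    · exact mem_Sp_one hσ hcst hins
    · obtain ⟨hmem, herase⟩ := hfacet l hl0 l.lt_succ_self
      exact mem_Sp_succ_of_erase_mem_MSet_zero hl0 hl hmem herase

lemma cst_val (x : Fin m) : cst n m x = fun _ => x :=
  funext fun _ => Fin.ofNat_val_eq_self x

lemma cst_zero : cst n m 0 = fun _ => 0 :=
  funext fun _ => Fin.ofNat_zero m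

end Matching

section Facet

variable {n m : ℕ}

lemma apply_ne_of_const_expAdj [Nontrivial (Fin n)] {d : Fin m} {g : Fin n → Fin m}
    (h : ExpAdj n m (fun _ => d) g) (j : Fin n) : g j ≠ d := by
  obtain ⟨i, hi⟩ := exists_ne j
  exact fun e => h i j hi e.symm

lemma const_ne_of_injective [Nontrivial (Fin n)] {f : Fin n → Fin m} (hf : Injective f)
    (x : Fin m) : (fun _ => x) ≠ f := by
  rintro rfl
  obtain ⟨i, j, hij⟩ := exists_pair_ne (Fin n)
  exact hij (hf rfl)

lemma exists_apply_eq_of_range_subset {α β : Type*} [Finite α] {g w : α → β}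
    (hg : Injective g) (hw : Injective w) (hsub : Set.range g ⊆ Set.range w) (a : α) :
    ∃ b, g b = w a := by
  have : Set.range g = Set.range w := Set.eq_of_subset_of_ncard_le hsub
    (by rw [Set.ncard_range_of_injective hw, Set.ncard_range_of_injective hg])
  show w a ∈ Set.range g
  exact this ▸ Set.mem_range_self a

-- The constant vertices `⟨x₁⟩, …, ⟨x_p⟩` of `η`.
def offConsts (w : Fin n → Fin m) : Finset (Fin n → Fin m) :=
  (univ \ univ.image w).image fun x => fun _ => x

lemma mem_offConsts {w f : Fin n → Fin m} :
    f ∈ offConsts w ↔ ∃ x ∉ Set.range w, (fun _ => x) = f := by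
  simp [offConsts]

variable {w f : Fin n → Fin m}

lemma offConsts_union_erase [Nontrivial (Fin n)] {f₁ : Fin n → Fin m} (hf₁ : Injective f₁)
    (hne : f₁ ≠ f) : (offConsts w ∪ {f₁, f}).erase f₁ = insert f (offConsts w) := by
  ext g
  simp only [mem_erase, mem_union, mem_insert, mem_singleton]
  constructor
  · rintro ⟨hg, hC | rfl | rfl⟩
    exacts [Or.inr hC, absurd rfl hg, Or.inl rfl]
  · rintro (rfl | hC)
    · exact ⟨hne.symm, Or.inr (Or.inr rfl)⟩
    · refine ⟨?_, Or.inl hC⟩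
      rintro rfl
      obtain ⟨x, -, hx⟩ := mem_offConsts.1 hC
      exact const_ne_of_injective hf₁ x hx

lemma const_not_mem_insert_offConsts [Nontrivial (Fin n)] (hf : Injective f) {c : Fin m}
    (hc : c ∈ Set.range w) : (fun _ => c) ∉ insert f (offConsts w) := by
  rw [mem_insert, mem_offConsts]
  rintro (h | ⟨x, hx, h⟩)
  · exact const_ne_of_injective hf c h
  · exact hx (congrFun h (Classical.arbitrary _) ▸ hc)

lemma insert_const_insert_offConsts_mem_Sp_zero [NeZero m] [Nontrivial (Fin n)]
    (hf : Injective f) (hw0 : 0 ∈ Set.range w) {c : Fin m} (hc0 : c ≠ 0)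
    (hf0 : ∀ i, f i ≠ 0) : insert (fun _ => c) (insert f (offConsts w)) ∈ Sp n m 0 := by
  refine mem_Sp_zero_of_forall_ne 0 (insert_nonempty _ _) ?_ ?_ <;>
    simp only [mem_insert, mem_offConsts] <;> rintro g (rfl | rfl | ⟨x, hx, rfl⟩)
  exacts [Or.inl ⟨c, fun _ => rfl⟩, Or.inr hf, Or.inl ⟨x, fun _ => rfl⟩,
    fun _ => hc0, hf0, fun _ h => hx ((show x = 0 from h) ▸ hw0)]

lemma const_zero_not_mem_insert_const_insert_offConsts [NeZero m] [Nontrivial (Fin n)]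
    (hf : Injective f) (hw0 : 0 ∈ Set.range w) {c : Fin m} (hc0 : c ≠ 0) :
    (fun _ => 0) ∉ insert (fun _ => c) (insert f (offConsts w)) := by
  rw [mem_insert]
  rintro (h | h)
  · exact hc0 (congrFun h (Classical.arbitrary _)).symm
  · exact const_not_mem_insert_offConsts hf hw0 h

/- The face obtained by adding `⟨0⟩` has the constant map `⟨d⟩` as a common neighbour. -/
lemma insert_const_insert_offConsts_erase_mem_MSet_zero [NeZero m] [Nontrivial (Fin n)]
    (hf : Injective f) (hw0 : 0 ∈ Set.range w) {c d : Fin m} (hc0 : c ≠ 0) (hd0 : d ≠ 0)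
    (hdc : d ≠ c) (hfd : ∀ i, f i ≠ d) :
    (insert (fun _ => c) (insert f (offConsts w))).erase (fun _ => d) ∈ MSet n m 0 := by
  have hface : insert (fun _ => 0)
      ((insert (fun _ => c) (insert f (offConsts w))).erase (fun _ => d)) ∈ Sp n m 0 := by
    refine mem_Sp_zero_of_forall_ne d (insert_nonempty _ _) ?_ ?_ <;>
      simp only [mem_insert, mem_erase, mem_offConsts] <;>
      rintro g (rfl | ⟨hgd, rfl | rfl | ⟨x, -, rfl⟩⟩)
    exacts [Or.inl ⟨0, fun _ => rfl⟩, Or.inl ⟨c, fun _ => rfl⟩, Or.inr hf,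
      Or.inl ⟨x, fun _ => rfl⟩, fun _ => hd0.symm, fun _ => hdc.symm, hfd,
      fun _ h => hgd (h ▸ rfl)]
  have hf_mem : f ∈ (insert (fun _ => c) (insert f (offConsts w))).erase (fun _ => d) :=
    mem_erase.2 ⟨(const_ne_of_injective hf d).symm, mem_insert_of_mem (mem_insert_self _ _)⟩
  unfold MSet
  rw [cst_zero]
  exact ⟨mem_Sp_zero_of_subset (subset_insert _ _) ⟨f, hf_mem⟩ hface,
    fun h => const_zero_not_mem_insert_const_insert_offConsts hf hw0 hc0 (mem_of_mem_erase h),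
    hface⟩

/- A common neighbour `h` of this set avoids `0` and, being adjacent to every `⟨x⟩` with
`x ∉ range w`, takes values in `range w \ {0}`, which has only `n - 1` elements; so `h` is
constant, with value `w l` for some `l ≠ k`, and then `f l = w l` violates adjacency. -/
lemma insert_zero_insert_offConsts_not_mem_Sp_zero [NeZero m] [Nontrivial (Fin n)]
    (hw : Injective w) {k : Fin n} (hk : w k = 0) (hfw : ∀ i, i ≠ k → f i = w i) :
    insert (fun _ => 0) (insert f (offConsts w)) ∉ Sp n m 0 := by
  rintro ⟨-, -, h, hh, hadj⟩
  have hne0 : ∀ j, h j ≠ 0 := apply_ne_of_const_expAdj (hadj _ (mem_insert_self _ _))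
  have hrange : Set.range h ⊆ Set.range w := by
    rintro _ ⟨j, rfl⟩
    by_contra hj
    have hmem : (fun _ => h j) ∈ insert (fun _ => 0) (insert f (offConsts w)) :=
      mem_insert_of_mem (mem_insert_of_mem (mem_offConsts.2 ⟨_, hj, rfl⟩))
    exact apply_ne_of_const_expAdj (hadj _ hmem) j rfl
  rcases hh with ⟨d, hd⟩ | hinj
  · obtain ⟨l, hl⟩ := hrange ⟨k, rfl⟩
    have hlk : l ≠ k := fun e => hne0 k (by rw [← hl, e, hk])
    obtain ⟨j, hj⟩ := exists_ne l
    exact hadj f (mem_insert_of_mem (mem_insert_self _ _)) l j hj.symm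
      (by rw [hfw l hlk, hl, hd, hd])
  · obtain ⟨j, hj⟩ := exists_apply_eq_of_range_subset hinj hw hrange k
    exact hne0 j (hj.trans hk)

lemma cst_mem_insert_offConsts_and_erase_mem_MSet_zero [NeZero m] [Nontrivial (Fin n)]
    (hf : Injective f) (hw0 : 0 ∈ Set.range w) {c : Fin m} (hc0 : c ≠ 0)
    (hgap : ∀ x, 0 < x → x < c → x ∉ Set.range w) (hfc : ∀ i, c ≤ f i)
    {l : ℕ} (hl0 : 0 < l) (hlc : l < (c : ℕ)) :
    cst n m l ∈ insert f (offConsts w) ∧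
      (insert (fun _ => c) (insert f (offConsts w))).erase (cst n m l) ∈ MSet n m 0 := by
  obtain ⟨x, rfl⟩ : ∃ x : Fin m, (x : ℕ) = l := ⟨⟨l, hlc.trans c.isLt⟩, rfl⟩
  have hx0 : x ≠ 0 := fun h => by simp [h] at hl0
  have hxc : x < c := hlc
  rw [cst_val]
  exact ⟨mem_insert_of_mem (mem_offConsts.2 ⟨x, hgap x hl0 hlc, rfl⟩),
    insert_const_insert_offConsts_erase_mem_MSet_zero hf hw0 hc0 hx0 hxc.ne
      fun i h => not_le.2 hxc (h ▸ hfc i)⟩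

theorem insert_offConsts_mem_MSet [NeZero m] [Nontrivial (Fin n)] (hw : Injective w)
    {k : Fin n} (hk : w k = 0) (hf : Injective f) (hfw : ∀ i, i ≠ k → f i = w i) {c : Fin m}
    (hc : c ∈ Set.range w) (hc0 : c ≠ 0) (hgap : ∀ x, 0 < x → x < c → x ∉ Set.range w)
    (hfc : ∀ i, c ≤ f i) : insert f (offConsts w) ∈ MSet n m c := by
  set σ := insert f (offConsts w)
  have hw0 : (0 : Fin m) ∈ Set.range w := ⟨k, hk⟩
  have hfacet (l : ℕ) (hl0 : 0 < l) (hlc : l < (c : ℕ)) :=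
    cst_mem_insert_offConsts_and_erase_mem_MSet_zero hf hw0 hc0 hgap hfc hl0 hlc
  have hplus : insert (fun _ => c) σ ∈ Sp n m 0 :=
    insert_const_insert_offConsts_mem_Sp_zero hf hw0 hc0
      fun i h => hc0 (nonpos_iff_eq_zero.1 (h ▸ hfc i))
  have hzero : cst n m 0 ∉ insert (fun _ => c) σ := by
    rw [cst_zero]
    exact const_zero_not_mem_insert_const_insert_offConsts hf hw0 hc0
  have hins : insert (cst n m 0) σ ∉ Sp n m 0 := by
    rw [cst_zero]
    exact insert_zero_insert_offConsts_not_mem_Sp_zero hw hk hfw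
  have hσplus : insert (fun _ => c) σ ∈ Sp n m c :=
    mem_Sp_of_erase_mem_MSet_zero hplus hzero
      (fun h => hins (mem_Sp_zero_of_subset (insert_subset_insert _ (subset_insert _ _))
        (insert_nonempty _ _) h))
      fun l hl0 hlc => ⟨mem_insert_of_mem (hfacet l hl0 hlc).1, (hfacet l hl0 hlc).2⟩
  have hσ : σ ∈ Sp n m c :=
    mem_Sp_of_erase_mem_MSet_zero
      (mem_Sp_zero_of_subset (subset_insert _ _) (insert_nonempty _ _) hplus)
      (fun h => hzero (mem_insert_of_mem h)) hins
      fun l hl0 hlc => ⟨(hfacet l hl0 hlc).1, mem_MSet_zero_of_subset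
        (erase_subset_erase _ (subset_insert _ _))
        ⟨f, mem_erase.2 ⟨(const_ne_of_injective hf _).symm, mem_insert_self _ _⟩⟩
        (hfacet l hl0 hlc).2⟩
  unfold MSet
  rw [cst_val]
  exact ⟨hσ, const_not_mem_insert_offConsts hf hc, hσplus⟩

end Facet

theorem facet_in_S_w_i0_general (n m : ℕ) [NeZero m] (hn : 3 ≤ n)
    (w : Fin n → Fin m) (hw : Function.Injective w) (k : Fin n) (hk : w k = 0)
    (i₀ : Fin n) (hi₀k : i₀ ≠ k) (hmin : ∀ j : Fin n, j ≠ k → w i₀ ≤ w j)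
    (f₁ f₂ : Fin n → Fin m)
    (hf₁ : Function.Injective f₁) (hf₂ : Function.Injective f₂) (hne : f₁ ≠ f₂)
    (hf₂w : ∀ i : Fin n, i ≠ k → f₂ i = w i)
    (η : Finset (Fin n → Fin m))
    (hη : η = ((Finset.univ \ Finset.univ.image w).image
        (fun x : Fin m => (fun _ => x : Fin n → Fin m))) ∪ {f₁, f₂})
    (hgt : w i₀ < f₂ k) :
    η.erase f₁ ∈ MSet n m ((w i₀ : Fin m) : ℕ) := by
  have : Nontrivial (Fin n) := Fin.nontrivial_iff_two_le.2 (by omega)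
  have hσ : η.erase f₁ = insert f₂ (offConsts w) := hη ▸ offConsts_union_erase hf₁ hne
  have hgap : ∀ x, 0 < x → x < w i₀ → x ∉ Set.range w := by
    rintro x hx0 hxc ⟨j, rfl⟩
    by_cases hj : j = k
    · exact hx0.ne' (hj ▸ hk)
    · exact not_le.2 hxc (hmin j hj)
  have hf₂ge : ∀ i, w i₀ ≤ f₂ i := fun i => by
    by_cases hi : i = k
    · exact hi ▸ hgt.le
    · exact hf₂w i hi ▸ hmin i hi
  rw [hσ]
  exact insert_offConsts_mem_MSet hw hk hf₂ hf₂w ⟨i₀, rfl⟩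
    (fun h => hi₀k (hw (h.trans hk.symm))) hgap hf₂ge

/-- Let `η = {⟨x₁⟩,…,⟨x_p⟩, f₁, f₂}` be a simplex of `𝒩(G)` contained in
`N(w₁⋯wₙ)` with `w_k = 1`, `{x₁,…,x_p} = [m] \ {w₁,…,wₙ}`, `f₂(i) = w_i` for
`i ≠ k`, and `w_{i₀} = min {w_j : j ≠ k}`.  If `f₂(k) > w_{i₀}`, then
`η \ {f₁}` lies in `S_{w_{i₀}}`, i.e. it is matched with
`(η \ {f₁}) ∪ {⟨w_{i₀}⟩}`.  (Colors `1,…,m` are `0,…,m-1`.) -/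
theorem facet_in_S_w_i0 (n m : ℕ) [NeZero m] (hn : 3 ≤ n) (hnm : n < m)
    (w : Fin n → Fin m) (hw : Function.Injective w) (k : Fin n) (hk : w k = 0)
    (i₀ : Fin n) (hi₀k : i₀ ≠ k) (hmin : ∀ j : Fin n, j ≠ k → w i₀ ≤ w j)
    (f₁ f₂ : Fin n → Fin m)
    (hf₁ : Function.Injective f₁) (hf₂ : Function.Injective f₂) (hne : f₁ ≠ f₂)
    (hf₂w : ∀ i : Fin n, i ≠ k → f₂ i = w i)
    (η : Finset (Fin n → Fin m))
    (hη : η = ((Finset.univ \ Finset.univ.image w).image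
        (fun x : Fin m => (fun _ => x : Fin n → Fin m))) ∪ {f₁, f₂})
    (hηface : η ∈ Sp n m 0)
    (hηN : ∀ f ∈ η, ExpAdj n m f w)
    (hgt : w i₀ < f₂ k) :
    η.erase f₁ ∈ MSet n m ((w i₀ : Fin m) : ℕ) :=
  facet_in_S_w_i0_general n m hn w hw k hk i₀ hi₀k hmin f₁ f₂ hf₁ hf₂ hne hf₂w η hη hgt
end
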